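/- arXiv:2011.02649 — 4 statements merged into one kernel-verified Lean document; each statement's English description precedes it below -/
import Mathlib

section
/- Let m ≥ 6 and let a₁, …, aₙ be positive integers such that every integer N with 0 ≤ N ≤ m-4 can be written as N = a₁P_m(x₁) + ⋯ + aₙP_m(xₙ) for some integers x₁, …, xₙ ∈ ℤ. Then 2ⁿ ≥ m - 3. -/
/-- The generalized `m`-gonal number at `x`. -/
def polygonal (m x : ℤ) : ℤ := ((m - 2) * x ^ 2 - (m - 4) * x) / 2

/-! Since `x ^ 2 - x` is always even, `polygonal` is an integer without rounding, and for `m ≥ 4`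
its only values in `[0, m - 4]` are `polygonal m 0 = 0` and `polygonal m 1 = 1`. A representation
`N = ∑ aᵢ P_m(xᵢ)` of some `N ≤ m - 4` with all `aᵢ > 0` is therefore a subset sum of the `aᵢ`, and
there are at most `2 ^ n` of those to cover the `m - 3` integers of `[0, m - 4]`. -/

lemma two_mul_polygonal (m x : ℤ) : 2 * polygonal m x = (m - 2) * x ^ 2 - (m - 4) * x := by
  have hx : 2 ∣ x ^ 2 - x := by
    rcases Int.even_or_odd x with ⟨k, rfl⟩ | ⟨k, rfl⟩
    · exact ⟨2 * k ^ 2 - k, by ring⟩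
    · exact ⟨2 * k ^ 2 + k, by ring⟩
  obtain ⟨k, hk⟩ := hx
  rw [polygonal, Int.mul_ediv_cancel' ⟨(m - 2) * k + x, by linear_combination (m - 2) * hk⟩]

lemma polygonal_nonneg {m : ℤ} (hm : 4 ≤ m) (x : ℤ) : 0 ≤ polygonal m x := by
  have h := two_mul_polygonal m x
  have hx : x ≤ x ^ 2 := by nlinarith [sq_nonneg (x - 1)]
  nlinarith [sq_nonneg x]

lemma polygonal_eq_zero_or_one_of_le {m x : ℤ} (hm : 4 ≤ m) (h : polygonal m x ≤ m - 4) :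
    polygonal m x = 0 ∨ polygonal m x = 1 := by
  have h2 := two_mul_polygonal m x
  rcases lt_trichotomy x 0 with hx | rfl | hx
  · nlinarith [sq_nonneg (x + 1)]
  · omega
  · obtain rfl | hx : x = 1 ∨ 2 ≤ x := by omega
    · omega
    · nlinarith [sq_nonneg (x - 2)]

lemma exists_subset_sum_eq_of_sum_mul_polygonal {ι : Type*} [Fintype ι] {m N : ℤ} (hm : 4 ≤ m)
    {a x : ι → ℤ} (ha : ∀ i, 0 < a i) (hN : N ≤ m - 4)
    (hx : ∑ i, a i * polygonal m (x i) = N) :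
    ∃ S : Finset ι, ∑ i ∈ S, a i = N := by
  classical
  have hsmall : ∀ i, polygonal m (x i) = 0 ∨ polygonal m (x i) = 1 := fun i ↦ by
    refine polygonal_eq_zero_or_one_of_le hm ?_
    have hle : a i * polygonal m (x i) ≤ N := hx ▸ Finset.single_le_sum
      (fun j _ ↦ mul_nonneg (ha j).le (polygonal_nonneg hm (x j))) (Finset.mem_univ i)
    nlinarith [ha i, polygonal_nonneg hm (x i)]
  refine ⟨Finset.univ.filter fun i ↦ polygonal m (x i) = 1, ?_⟩
  rw [Finset.sum_filter, ← hx]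
  refine Finset.sum_congr rfl fun i _ ↦ ?_
  rcases hsmall i with h | h <;> simp [h]

lemma add_one_le_two_pow_of_forall_subset_sum {ι : Type*} [Fintype ι] (a : ι → ℤ) (k : ℤ)
    (h : ∀ N, 0 ≤ N → N ≤ k → ∃ S : Finset ι, ∑ i ∈ S, a i = N) :
    k + 1 ≤ 2 ^ Fintype.card ι := by
  have hsub : Finset.Icc 0 k ⊆ Finset.univ.image fun S : Finset ι ↦ ∑ i ∈ S, a i := fun N hN ↦ by
    obtain ⟨hN0, hNk⟩ := Finset.mem_Icc.mp hN
    simpa using h N hN0 hNk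
  have hcard := (Finset.card_le_card hsub).trans Finset.card_image_le
  rw [Int.card_Icc, Finset.card_univ, Fintype.card_finset] at hcard
  have : (k + 1 - 0).toNat ≤ ((2 ^ Fintype.card ι : ℕ) : ℤ) := by exact_mod_cast hcard
  push_cast at this
  omega

theorem stmt_7 (m : ℤ) (hm : 6 ≤ m) (n : ℕ) (a : Fin n → ℤ) (ha : ∀ i, 0 < a i)
    (hrep : ∀ N : ℤ, 0 ≤ N → N ≤ m - 4 →
      ∃ x : Fin n → ℤ, ∑ i, a i * polygonal m (x i) = N) :
    m - 3 ≤ 2 ^ n := by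
  have hsum : ∀ N, 0 ≤ N → N ≤ m - 4 → ∃ S : Finset (Fin n), ∑ i ∈ S, a i = N :=
    fun N hN0 hN ↦ by
      obtain ⟨x, hx⟩ := hrep N hN0 hN
      exact exists_subset_sum_eq_of_sum_mul_polygonal (by omega) ha hN hx
  have := add_one_le_two_pow_of_forall_subset_sum a (m - 4) hsum
  rw [Fintype.card_fin] at this
  linarith
end

section
/- Let m ≥ 5, and let r be an integer with 0 < r < m-2, gcd(r, m-2) = 1 and 2r ≠ m-2. Then for every integer x with |x| ≥ 2, one has P_m^{(r)}(x) > (m-2)/2, and exactly one of the two values P_m^{(r)}(1), P_m^{(r)}(-1) is ≤ (m-2)/2. Consequently the set {y ∈ ℤ : 0 < P_m^{(r)}(y) ≤ (m-2)/2} has exactly one element. -/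
/-!
Write `n = m - 2`, so that `2 P(x) = n x² - (n - 2r) x`. Regrouping as `n (x² - x) + 2 r x` for
`x ≥ 2` and as `n (x² + x) + 2 (n - r) |x|` for `x ≤ -2` shows `2 P(x) > n` once `|x| ≥ 2`,
because `0 < r < n`.
Since `P(0) = 0`, only `x = ±1` can give `0 < 2 P(x) ≤ n`, and `P(1) = r`, `P(-1) = n - r`:
exactly one of `2r ≤ n` and `2(n - r) ≤ n` holds when `2r ≠ n`.
-/

/-- The generalized shifted `m`-gonal number of level `r` at `x`. -/
def shiftedPolygonal (m r x : ℤ) : ℤ := ((m - 2) * x ^ 2 - (m - 2 - 2 * r) * x) / 2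

section

variable {m r : ℤ}

theorem two_mul_shiftedPolygonal (m r x : ℤ) :
    2 * shiftedPolygonal m r x = (m - 2) * x ^ 2 - (m - 2 - 2 * r) * x := by
  obtain ⟨k, hk⟩ := Int.even_mul_succ_self (x - 1)
  exact Int.mul_ediv_cancel' ⟨(m - 2) * k + r * x, by linear_combination (m - 2) * hk⟩

@[simp]
theorem shiftedPolygonal_zero (m r : ℤ) : shiftedPolygonal m r 0 = 0 := by
  simp [shiftedPolygonal]

@[simp]
theorem shiftedPolygonal_one (m r : ℤ) : shiftedPolygonal m r 1 = r := by
  have := two_mul_shiftedPolygonal m r 1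
  omega

@[simp]
theorem shiftedPolygonal_neg_one (m r : ℤ) : shiftedPolygonal m r (-1) = m - 2 - r := by
  have := two_mul_shiftedPolygonal m r (-1)
  omega

theorem lt_two_mul_shiftedPolygonal_of_two_le_abs (hr0 : 0 < r) (hr1 : r < m - 2) {x : ℤ}
    (hx : 2 ≤ |x|) :
    m - 2 < 2 * shiftedPolygonal m r x := by
  rw [two_mul_shiftedPolygonal]
  rcases le_abs'.mp hx with hneg | hpos
  · have hq : 2 ≤ x ^ 2 + x := by nlinarith
    nlinarith [mul_le_mul_of_nonneg_left hq (by omega : (0 : ℤ) ≤ m - 2)]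
  · have hq : 2 ≤ x ^ 2 - x := by nlinarith
    nlinarith [mul_le_mul_of_nonneg_left hq (by omega : (0 : ℤ) ≤ m - 2)]

theorem pos_and_two_mul_shiftedPolygonal_le_iff (hr0 : 0 < r) (hr1 : r < m - 2) {y : ℤ} :
    0 < shiftedPolygonal m r y ∧ 2 * shiftedPolygonal m r y ≤ m - 2 ↔
      y = 1 ∧ 2 * r ≤ m - 2 ∨ y = -1 ∧ m - 2 ≤ 2 * r := by
  constructor
  · rintro ⟨hpos, hle⟩
    have hy : |y| ≤ 1 := by
      by_contra! hy
      exact absurd hle (not_le.mpr (lt_two_mul_shiftedPolygonal_of_two_le_abs hr0 hr1 hy))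
    obtain ⟨hy₁, hy₂⟩ := abs_le.mp hy
    interval_cases y <;>
      simp only [shiftedPolygonal_zero, shiftedPolygonal_one, shiftedPolygonal_neg_one]
        at hpos hle <;> omega
  · rintro (⟨rfl, h⟩ | ⟨rfl, h⟩) <;>
      simp only [shiftedPolygonal_one, shiftedPolygonal_neg_one] <;> omega

end

theorem stmt_8_general (m r : ℤ) (hr0 : 0 < r) (hr1 : r < m - 2)
    (hne : 2 * r ≠ m - 2) :
    (∀ x : ℤ, 2 ≤ |x| → m - 2 < 2 * shiftedPolygonal m r x) ∧
    (2 * shiftedPolygonal m r 1 ≤ m - 2 ↔ ¬ (2 * shiftedPolygonal m r (-1) ≤ m - 2)) ∧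
    {y : ℤ | 0 < shiftedPolygonal m r y ∧ 2 * shiftedPolygonal m r y ≤ m - 2}.ncard = 1 := by
  refine ⟨fun x hx ↦ lt_two_mul_shiftedPolygonal_of_two_le_abs hr0 hr1 hx,
    by simp only [shiftedPolygonal_one, shiftedPolygonal_neg_one]; omega, ?_⟩
  refine Set.ncard_eq_one.mpr ⟨if 2 * r < m - 2 then 1 else -1, ?_⟩
  ext y
  simp only [Set.mem_ofPred_eq, Set.mem_singleton_iff,
    pos_and_two_mul_shiftedPolygonal_le_iff hr0 hr1]
  split_ifs <;> omega

theorem stmt_8 (m r : ℤ) (hm : 5 ≤ m) (hr0 : 0 < r) (hr1 : r < m - 2)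
    (hgcd : Int.gcd r (m - 2) = 1) (hne : 2 * r ≠ m - 2) :
    (∀ x : ℤ, 2 ≤ |x| → m - 2 < 2 * shiftedPolygonal m r x) ∧
    (2 * shiftedPolygonal m r 1 ≤ m - 2 ↔ ¬ (2 * shiftedPolygonal m r (-1) ≤ m - 2)) ∧
    {y : ℤ | 0 < shiftedPolygonal m r y ∧ 2 * shiftedPolygonal m r y ≤ m - 2}.ncard = 1 :=
  stmt_8_general m r hr0 hr1 hne
end

section
/- Let m ≥ 3, let p be an odd prime with gcd(p, m-2) = 1, let r be an integer, and let j be an integer with 2(m-2)j ≡ m-2-2r (mod p). Define r' = ((m-2)(p + 2j) - (m-2-2r))/(2p). Then r' is an integer, and for every integer y, P_m^{(r)}(py + j) = p²·P_m^{(r')}(y) + P_m^{(r)}(j). Moreover, if gcd(r, m-2) = 1 then gcd(r', m-2) = 1. -/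
theorem stmt_15 (m r p j : ℤ) (hm : 3 ≤ m) (hp : Prime p) (hpodd : Odd p)
    (hcop : Int.gcd p (m - 2) = 1) (hj : 2 * (m - 2) * j ≡ m - 2 - 2 * r [ZMOD p]) :
    (2 * p) ∣ ((m - 2) * (p + 2 * j) - (m - 2 - 2 * r)) ∧
    (∀ y : ℤ, shiftedPolygonal m r (p * y + j) =
        p ^ 2 * shiftedPolygonal m (((m - 2) * (p + 2 * j) - (m - 2 - 2 * r)) / (2 * p)) y
          + shiftedPolygonal m r j) ∧
    (Int.gcd r (m - 2) = 1 →
      Int.gcd (((m - 2) * (p + 2 * j) - (m - 2 - 2 * r)) / (2 * p)) (m - 2) = 1) := by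
  obtain ⟨k, hk⟩ := hpodd
  -- divisibility by p
  obtain ⟨c, hc⟩ := hj.dvd
  have hpdvd : p ∣ ((m - 2) * (p + 2 * j) - (m - 2 - 2 * r)) :=
    ⟨(m - 2) - c, by linear_combination -hc⟩
  -- divisibility by 2
  have h2dvd : (2 : ℤ) ∣ ((m - 2) * (p + 2 * j) - (m - 2 - 2 * r)) :=
    ⟨(m - 2) * (k + j) + r, by linear_combination (m - 2) * hk⟩
  have hcop2p : IsCoprime (2 : ℤ) p := ⟨-k, 1, by rw [hk]; ring⟩
  have hdvd : (2 * p) ∣ ((m - 2) * (p + 2 * j) - (m - 2 - 2 * r)) :=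
    hcop2p.mul_dvd h2dvd hpdvd
  refine ⟨hdvd, ?_, ?_⟩
  · -- the identity
    have hr' : 2 * p * (((m - 2) * (p + 2 * j) - (m - 2 - 2 * r)) / (2 * p))
        = (m - 2) * (p + 2 * j) - (m - 2 - 2 * r) := Int.mul_ediv_cancel' hdvd
    set r' := ((m - 2) * (p + 2 * j) - (m - 2 - 2 * r)) / (2 * p) with hr'def
    have heven : ∀ s x : ℤ, (2 : ℤ) ∣ ((m - 2) * x ^ 2 - (m - 2 - 2 * s) * x) := by
      intro s x
      rcases Int.even_or_odd x with ⟨t, ht⟩ | ⟨t, ht⟩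
      · exact ⟨(m - 2) * (2 * t ^ 2) - (m - 2 - 2 * s) * t, by subst ht; ring⟩
      · exact ⟨(m - 2) * (2 * t ^ 2 + 2 * t) - (m - 2 - 2 * s) * t + s, by subst ht; ring⟩
    intro y
    obtain ⟨a, ha⟩ := heven r' y
    obtain ⟨b, hb⟩ := heven r j
    have hnum : (m - 2) * (p * y + j) ^ 2 - (m - 2 - 2 * r) * (p * y + j)
        = 2 * (p ^ 2 * a + b) := by
      have : (m - 2) * (p * y + j) ^ 2 - (m - 2 - 2 * r) * (p * y + j)
          = p ^ 2 * ((m - 2) * y ^ 2 - (m - 2 - 2 * r') * y)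
            + ((m - 2) * j ^ 2 - (m - 2 - 2 * r) * j) := by
        linear_combination (-(y * p)) * hr'
      rw [this, ha, hb]; ring
    unfold shiftedPolygonal
    rw [hnum, ha, hb, Int.mul_ediv_cancel_left _ two_ne_zero,
      Int.mul_ediv_cancel_left _ two_ne_zero, Int.mul_ediv_cancel_left _ two_ne_zero]
  · -- coprimality
    intro hr
    have hr' : 2 * p * (((m - 2) * (p + 2 * j) - (m - 2 - 2 * r)) / (2 * p))
        = (m - 2) * (p + 2 * j) - (m - 2 - 2 * r) := Int.mul_ediv_cancel' hdvd
    set r' := ((m - 2) * (p + 2 * j) - (m - 2 - 2 * r)) / (2 * p) with hr'def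
    have h2 : 2 * (p * r') = 2 * r + 2 * ((m - 2) * (k + j)) := by
      linear_combination hr' + (m - 2) * hk
    have hpr : p * r' = r + (m - 2) * (k + j) := by linarith
    have hrm : IsCoprime r (m - 2) := Int.isCoprime_iff_gcd_eq_one.mpr hr
    have : IsCoprime (p * r') (m - 2) := by
      rw [hpr]; exact hrm.add_mul_left_left (k + j)
    exact Int.isCoprime_iff_gcd_eq_one.mp this.of_mul_left_right
end

section
/- Let m ≥ 14 with m ≢ 0 (mod 4), and suppose Δ(x₁,…,xₙ) = a₁P_m^{(r₁)}(x₁) + ⋯ + aₙP_m^{(rₙ)}(xₙ) is a generalized shifted m-gonal form (aᵢ positive integers, gcd(rᵢ, m-2) = 1, 0 ≤ rᵢ ≤ m-2) that represents every non-negative integer N ≤ (m-2)/2 (i.e., for each such N there exist integers xᵢ with Δ(x) = N). Then 2ⁿ ≥ ⌊m/2⌋. -/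
open Finset

theorem card_le_two_pow_of_forall_eq_subset_sum {ι M : Type*} [Fintype ι] [AddCommMonoid M]
    [DecidableEq M] (S : Finset M) (c : ι → M) (h : ∀ N ∈ S, ∃ s : Finset ι, ∑ i ∈ s, c i = N) :
    #S ≤ 2 ^ Fintype.card ι := by
  have hS : S ⊆ (univ : Finset ι).powerset.image (fun s => ∑ i ∈ s, c i) := by
    intro N hN
    obtain ⟨s, hs⟩ := h N hN
    exact mem_image.mpr ⟨s, mem_powerset.mpr (subset_univ s), hs⟩
  calc #S ≤ #((univ : Finset ι).powerset.image (fun s => ∑ i ∈ s, c i)) := card_le_card hS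
    _ ≤ #(univ : Finset ι).powerset := card_image_le
    _ = 2 ^ Fintype.card ι := by rw [card_powerset, card_univ]

namespace shiftedPolygonal

theorem two_mul_eq (m r x : ℤ) :
    2 * shiftedPolygonal m r x = (m - 2 - r) * (x * (x - 1)) + r * (x * (x + 1)) := by
  have hdvd : (2 : ℤ) ∣ (m - 2) * x ^ 2 - (m - 2 - 2 * r) * x := by
    have : (m - 2) * x ^ 2 - (m - 2 - 2 * r) * x = (m - 2) * (x * (x - 1)) + 2 * r * x := by ring
    rw [this]
    exact dvd_add (dvd_mul_of_dvd_right (Int.even_mul_pred_self x).two_dvd _) ⟨r * x, by ring⟩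
  rw [shiftedPolygonal, Int.mul_ediv_cancel' hdvd]
  ring

variable {m r : ℤ}

theorem nonneg (hr0 : 0 ≤ r) (hrm : r ≤ m - 2) (x : ℤ) : 0 ≤ shiftedPolygonal m r x := by
  have h := two_mul_eq m r x
  have h₁ : 0 ≤ x * (x - 1) := by rcases le_or_gt x 0 with hx | hx <;> nlinarith
  have h₂ : 0 ≤ x * (x + 1) := by rcases le_or_gt x (-1) with hx | hx <;> nlinarith
  nlinarith [mul_nonneg (sub_nonneg.mpr hrm) h₁, mul_nonneg hr0 h₂]

theorem eq_zero_or_eq_min_of_two_mul_le (hr0 : 0 ≤ r) (hrm : r ≤ m - 2) {x : ℤ}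
    (hsmall : 2 * shiftedPolygonal m r x ≤ m - 2) :
    shiftedPolygonal m r x = 0 ∨ shiftedPolygonal m r x = min r (m - 2 - r) := by
  have h := two_mul_eq m r x
  obtain rfl | rfl | rfl | hx : x = -1 ∨ x = 0 ∨ x = 1 ∨ (x ≤ -2 ∨ 2 ≤ x) := by omega
  · right; rw [min_eq_right] <;> omega
  · left; omega
  · right; rw [min_eq_left] <;> omega
  · -- both `x (x - 1)` and `x (x + 1)` are `≥ 2`, so `2 P ≥ 2 (m - 2)`, forcing `m = 2` and `P = 0`
    have h₁ : 2 ≤ x * (x - 1) := by rcases hx with hx | hx <;> nlinarith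
    have h₂ : 2 ≤ x * (x + 1) := by rcases hx with hx | hx <;> nlinarith
    have hm : m - 2 ≤ 0 := by
      linarith [mul_le_mul_of_nonneg_left h₁ (sub_nonneg.mpr hrm), mul_le_mul_of_nonneg_left h₂ hr0]
    have := nonneg hr0 hrm x
    left; omega

end shiftedPolygonal

theorem exists_subset_sum_of_sum_shiftedPolygonal_eq {ι : Type*} [Fintype ι] {m N : ℤ}
    {a r x : ι → ℤ} (ha : ∀ i, 0 < a i) (hr : ∀ i, 0 ≤ r i ∧ r i ≤ m - 2)
    (hN : 2 * N ≤ m - 2) (hsum : ∑ i, a i * shiftedPolygonal m (r i) (x i) = N) :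
    ∃ s : Finset ι, ∑ i ∈ s, a i * min (r i) (m - 2 - r i) = N := by
  refine ⟨univ.filter fun i => shiftedPolygonal m (r i) (x i) ≠ 0, ?_⟩
  rw [sum_filter, ← hsum]
  refine sum_congr rfl fun i _ => ?_
  have hP := shiftedPolygonal.nonneg (hr i).1 (hr i).2 (x i)
  have hterm : a i * shiftedPolygonal m (r i) (x i) ≤ N :=
    hsum ▸ single_le_sum (fun j _ => mul_nonneg (ha j).le
      (shiftedPolygonal.nonneg (hr j).1 (hr j).2 (x j))) (mem_univ i)
  have hsmall : 2 * shiftedPolygonal m (r i) (x i) ≤ m - 2 := by nlinarith [ha i]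
  rcases shiftedPolygonal.eq_zero_or_eq_min_of_two_mul_le (hr i).1 (hr i).2 hsmall with h | h
  · simp [h]
  · split_ifs with h0
    · rw [h]
    · simp [not_not.mp h0]

theorem stmt_18_general (m : ℤ) (n : ℕ)
    (a r : Fin n → ℤ) (ha : ∀ i, 0 < a i)
    (hr : ∀ i, Int.gcd (r i) (m - 2) = 1 ∧ 0 ≤ r i ∧ r i ≤ m - 2)
    (hrep : ∀ N : ℤ, 0 ≤ N → 2 * N ≤ m - 2 →
      ∃ x : Fin n → ℤ, ∑ i, a i * shiftedPolygonal m (r i) (x i) = N) :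
    m / 2 ≤ 2 ^ n := by
  have hcard : #(Icc 0 ((m - 2) / 2)) ≤ 2 ^ n := by
    simpa using card_le_two_pow_of_forall_eq_subset_sum (Icc 0 ((m - 2) / 2))
      (fun i => a i * min (r i) (m - 2 - r i)) fun N hN => by
        obtain ⟨hN0, hN1⟩ := mem_Icc.mp hN
        obtain ⟨x, hx⟩ := hrep N hN0 (by omega)
        exact exists_subset_sum_of_sum_shiftedPolygonal_eq ha (fun i => (hr i).2) (by omega) hx
  rw [Int.card_Icc] at hcard
  have := Int.self_le_toNat ((m - 2) / 2 + 1 - 0)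
  have : (((m - 2) / 2 + 1 - 0).toNat : ℤ) ≤ 2 ^ n := by exact_mod_cast hcard
  omega

theorem stmt_18 (m : ℤ) (hm : 14 ≤ m) (hm4 : ¬ (4 ∣ m)) (n : ℕ)
    (a r : Fin n → ℤ) (ha : ∀ i, 0 < a i)
    (hr : ∀ i, Int.gcd (r i) (m - 2) = 1 ∧ 0 ≤ r i ∧ r i ≤ m - 2)
    (hrep : ∀ N : ℤ, 0 ≤ N → 2 * N ≤ m - 2 →
      ∃ x : Fin n → ℤ, ∑ i, a i * shiftedPolygonal m (r i) (x i) = N) :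
    m / 2 ≤ 2 ^ n :=
  stmt_18_general m n a r ha hr hrep
end
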